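/- arXiv:2410.14809 — 2 statements merged into one kernel-verified Lean document; each statement's English description precedes it below -/
import Mathlib

section
/- Let −1 < p < 0. For every compact set K ⊆ ℝ containing more than one point, cap_p(K) ≥ 2^{1/p} · diam(K), with equality if and only if K consists of exactly two points. Consequently, for q ≤ −1, the ratio cap_q(K)/cap_p(K) is at most 2^{1/q − 1/p}, with equality if and only if K contains exactly two points. -/
open MeasureTheory Metric Set ENNReal Filter

noncomputable section

namespace Riesz

variable {E : Type*} [MeasurableSpace E] [PseudoMetricSpace E]

/-- Borel probability measures supported on `K` (i.e. giving full mass to `K`). -/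
def probOn (K : Set E) : Set (Measure E) :=
  {μ | IsProbabilityMeasure μ ∧ μ Kᶜ = 0}

/-- The Riesz `p`-energy `∬ |x-y|^{-p} dμ dμ` of a measure `μ`, valued in `ℝ≥0∞`.
(The kernel `(dist x y)^{-p}`, computed in `ℝ≥0∞`, is `∞` on the diagonal when `p > 0`
and `0` on the diagonal when `p < 0`.) -/
def energyOf (p : ℝ) (μ : Measure E) : ℝ≥0∞ :=
  ∫⁻ z : E × E, (ENNReal.ofReal (dist z.1 z.2)) ^ (-p) ∂(μ.prod μ)

/-- The Riesz `p`-energy of a set `K`, for `p ≠ 0`: a supremum over probability measures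
on `K` when `p < 0`, an infimum when `p > 0`.  (For `K = ∅` this gives `0` when `p < 0`
and `∞` when `p > 0`.) -/
def energy (p : ℝ) (K : Set E) : ℝ≥0∞ :=
  if p < 0 then ⨆ μ ∈ probOn K, energyOf p μ
  else ⨅ μ ∈ probOn K, energyOf p μ

/-- The logarithmic energy `∬ log (1/|x-y|) dμ dμ` of a measure, as an extended real:
the positive part (with value `∞` on the diagonal) minus the negative part. -/
def logEnergyOf (μ : Measure E) : EReal :=
  ((∫⁻ z : E × E, (if dist z.1 z.2 = 0 then ⊤ else
      ENNReal.ofReal (Real.log (1 / dist z.1 z.2))) ∂(μ.prod μ) : ℝ≥0∞) : EReal)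
  - ((∫⁻ z : E × E, ENNReal.ofReal (Real.log (dist z.1 z.2)) ∂(μ.prod μ) : ℝ≥0∞) : EReal)

/-- The logarithmic energy of a set `K`: infimum over probability measures on `K`. -/
def logEnergy (K : Set E) : EReal :=
  ⨅ μ ∈ probOn K, logEnergyOf μ

/-- The Riesz `p`-capacity of a set: `V_p(K)^{-1/p}` for `p ≠ 0`, and the logarithmic
capacity `exp(-V_log(K))` for `p = 0`. -/
def cap (p : ℝ) (K : Set E) : ℝ :=
  if p = 0 then
    (if logEnergy K = ⊤ then 0 else Real.exp (-(logEnergy K).toReal))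
  else ((energy p K).toReal) ^ (-1 / p)

/-- `μ` is a `p`-equilibrium measure of `K`: a probability measure on `K` whose
`p`-energy attains the optimal `p`-energy of `K`. -/
def IsEquilibrium (p : ℝ) (K : Set E) (μ : Measure E) : Prop :=
  μ ∈ probOn K ∧ energyOf p μ = energy p K

/-- A set `Z` has inner `p`-capacity zero: every compact subset has `p`-capacity zero. -/
def InnerCapZero (p : ℝ) (Z : Set E) : Prop :=
  ∀ Z' ⊆ Z, IsCompact Z' → cap p Z' = 0

end Riesz

end

/-!
Let `a < b` be the extreme points of `K`, so that `diam K = b - a`. The measure `(δ_a + δ_b) / 2`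
has `p`-energy `(b - a) ^ (-p) / 2`, which gives `cap_p K ≥ 2 ^ (1 / p) * diam K` for every `p < 0`.

For `q ≤ -1` this is also an upper bound for the energy: on `[a, b]` we have
`|x - y| ^ (-q) ≤ (b - a) ^ (-q - 1) * |x - y|`, and every probability measure on `[a, b]` has
mean distance `∬ |x - y| ≤ (b - a) / 2`. Hence `cap_q K = 2 ^ (1 / q) * diam K`, and the statement
about the ratio reduces to the one about `cap_p K`.

For `-1 < p < 0` the same argument bounds the energy of a two-point set, on which the kernel is
proportional to `|x - y|`. Conversely, if `K` contains a third point `c ∈ (a, b)`, moving a small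
mass `ε` from `a` and `b` to `c` increases the energy to first order in `ε`, because
`r ↦ r ^ (-p)` is strictly subadditive.
-/

namespace Riesz

section MetricSpace

variable {E : Type*} [MeasurableSpace E] {K : Set E} {μ : Measure E}

lemma ae_mem_prod_of_mem_probOn (hμ : μ ∈ probOn K) : ∀ᵐ z ∂μ.prod μ, z.1 ∈ K ∧ z.2 ∈ K := by
  have : IsProbabilityMeasure μ := hμ.1
  exact (Measure.quasiMeasurePreserving_fst.ae hμ.2).and
    (Measure.quasiMeasurePreserving_snd.ae hμ.2)

variable [PseudoMetricSpace E] {p : ℝ}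

lemma energy_of_neg (hp : p < 0) : energy p K = ⨆ μ ∈ probOn K, energyOf p μ := if_pos hp

lemma energyOf_le_energy (hp : p < 0) (hμ : μ ∈ probOn K) : energyOf p μ ≤ energy p K :=
  (energy_of_neg (K := K) hp).symm ▸ le_iSup₂_of_le μ hμ le_rfl

lemma energyOf_le_diam_rpow (hp : p ≤ 0) (hK : Bornology.IsBounded K) (hμ : μ ∈ probOn K) :
    energyOf p μ ≤ ENNReal.ofReal (diam K) ^ (-p) := by
  have : IsProbabilityMeasure μ := hμ.1
  calc energyOf p μ ≤ ∫⁻ _, ENNReal.ofReal (diam K) ^ (-p) ∂μ.prod μ := by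
        refine lintegral_mono_ae ?_
        filter_upwards [ae_mem_prod_of_mem_probOn hμ] with z hz
        exact ENNReal.rpow_le_rpow (ofReal_le_ofReal (dist_le_diam_of_mem hK hz.1 hz.2))
          (neg_nonneg.2 hp)
    _ = ENNReal.ofReal (diam K) ^ (-p) := by simp

lemma energy_ne_top (hp : p < 0) (hK : Bornology.IsBounded K) : energy p K ≠ ⊤ := by
  refine ne_top_of_le_ne_top (b := ENNReal.ofReal (diam K) ^ (-p))
    (ENNReal.rpow_ne_top_of_nonneg (neg_nonneg.2 hp.le) ofReal_ne_top) ?_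
  rw [energy_of_neg hp]
  exact iSup₂_le fun μ hμ => energyOf_le_diam_rpow hp.le hK hμ

lemma energyOf_smul_dirac_add [MeasurableSingletonClass E] (hp : p < 0)
    (α β γ : ℝ≥0∞) (a b c : E) :
    energyOf p (α • Measure.dirac a + β • Measure.dirac b + γ • Measure.dirac c)
      = 2 * (α * β * ENNReal.ofReal (dist a b) ^ (-p) + α * γ * ENNReal.ofReal (dist a c) ^ (-p)
        + β * γ * ENNReal.ofReal (dist b c) ^ (-p)) := by
  simp [energyOf, Measure.prod_add, Measure.add_prod, Measure.prod_smul_left,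
    Measure.prod_smul_right, Measure.dirac_prod_dirac, lintegral_add_measure, dist_comm,
    ENNReal.zero_rpow_of_pos (neg_pos.2 hp)]
  ring

/-- The left-hand side is the energy of the measure with masses `(1 - ε) / 2`, `(1 - ε) / 2`, `ε`
at `a`, `b`, `c`. -/
lemma ofReal_le_energy_of_mem [MeasurableSingletonClass E] (hp : p < 0) {a b c : E}
    (ha : a ∈ K) (hb : b ∈ K) (hc : c ∈ K) {ε : ℝ} (hε₀ : 0 ≤ ε) (hε₁ : ε ≤ 1) :
    ENNReal.ofReal ((1 - ε) ^ 2 / 2 * dist a b ^ (-p)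
      + ε * (1 - ε) * (dist a c ^ (-p) + dist b c ^ (-p))) ≤ energy p K := by
  set w := (1 - ε) / 2
  have hw : 0 ≤ w := by positivity
  set ν := ENNReal.ofReal w • Measure.dirac a + ENNReal.ofReal w • Measure.dirac b
    + ENNReal.ofReal ε • Measure.dirac c
  have hν : ν ∈ probOn K := by
    refine ⟨⟨?_⟩, by simp [ν, ha, hb, hc]⟩
    simp only [ν, Measure.add_apply, Measure.smul_apply, measure_univ, smul_eq_mul, mul_one]
    rw [← ofReal_add hw hw, ← ofReal_add (by positivity) hε₀]
    simp [w]
  refine le_of_eq_of_le ?_ (energyOf_le_energy hp hν)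
  have hs : 0 ≤ -p := neg_nonneg.2 hp.le
  rw [energyOf_smul_dirac_add hp]
  simp only [ofReal_rpow_of_nonneg dist_nonneg hs]
  rw [← ofReal_mul hw, ← ofReal_mul hw, ← ofReal_mul (mul_nonneg hw hw),
    ← ofReal_mul (mul_nonneg hw hε₀), ← ofReal_mul (mul_nonneg hw hε₀),
    ← ofReal_add (by positivity) (by positivity), ← ofReal_add (by positivity) (by positivity),
    ← ofReal_ofNat 2, ← ofReal_mul zero_le_two]
  congr 1
  ring

lemma ofReal_half_dist_rpow_le_energy [MeasurableSingletonClass E] (hp : p < 0) {a b : E}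
    (ha : a ∈ K) (hb : b ∈ K) : ENNReal.ofReal (dist a b ^ (-p) / 2) ≤ energy p K := by
  refine le_of_eq_of_le ?_ (ofReal_le_energy_of_mem hp ha hb ha le_rfl zero_le_one)
  congr 1
  ring

lemma exists_half_lt_of_lt {t A : ℝ} (ht : 0 ≤ t) (htA : t < A) :
    ∃ ε, 0 ≤ ε ∧ ε ≤ 1 ∧ t / 2 < (1 - ε) ^ 2 / 2 * t + ε * (1 - ε) * A := by
  have hA : 0 < A := ht.trans_lt htA
  refine ⟨(A - t) / (2 * A), by positivity, ?_, ?_⟩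
  · rw [div_le_one (by positivity)]
    linarith
  · set ε := (A - t) / (2 * A)
    have hεA : ε * A = (A - t) / 2 := by simp only [ε]; field_simp
    have hε : 0 < ε := by positivity
    have hgain : (1 - ε) ^ 2 / 2 * t + ε * (1 - ε) * A - t / 2
        = ε * (A - t) / 2 + ε ^ 2 * t / 2 := by
      linear_combination (-ε) * hεA
    have h₁ : 0 < ε * (A - t) / 2 := by have := sub_pos.2 htA; positivity
    have h₂ : 0 ≤ ε ^ 2 * t / 2 := by positivity
    linarith

lemma rpow_add_lt_add_rpow {s u v : ℝ} (hs₀ : 0 < s) (hs₁ : s < 1) (hu : 0 < u) (hv : 0 < v) :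
    (u + v) ^ s < u ^ s + v ^ s := by
  have hmul : ∀ x : ℝ, 0 < x → x ^ s = x * x ^ (s - 1) := fun x hx => by
    rw [← Real.rpow_one_add' hx.le (by linarith), add_sub_cancel]
  calc (u + v) ^ s = u * (u + v) ^ (s - 1) + v * (u + v) ^ (s - 1) := by
        rw [hmul _ (by positivity)]; ring
    _ < u * u ^ (s - 1) + v * v ^ (s - 1) := by
        gcongr ?_ * ?_ + ?_ * ?_
        · exact Real.rpow_lt_rpow_of_neg hu (by linarith) (by linarith)
        · exact Real.rpow_lt_rpow_of_neg hv (by linarith) (by linarith)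
    _ = u ^ s + v ^ s := by rw [← hmul u hu, ← hmul v hv]

lemma ofReal_half_dist_rpow_lt_energy [MeasurableSingletonClass E] (hp₁ : -1 < p) (hp₂ : p < 0)
    {a b c : E} (ha : a ∈ K) (hb : b ∈ K) (hc : c ∈ K) (hac : 0 < dist a c)
    (hcb : 0 < dist c b) : ENNReal.ofReal (dist a b ^ (-p) / 2) < energy p K := by
  have hsub : dist a b ^ (-p) < dist a c ^ (-p) + dist b c ^ (-p) := calc
    dist a b ^ (-p) ≤ (dist a c + dist c b) ^ (-p) :=
      Real.rpow_le_rpow dist_nonneg (dist_triangle a c b) (by linarith)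
    _ < dist a c ^ (-p) + dist c b ^ (-p) :=
      rpow_add_lt_add_rpow (by linarith) (by linarith) hac hcb
    _ = dist a c ^ (-p) + dist b c ^ (-p) := by rw [dist_comm c b]
  obtain ⟨ε, hε₀, hε₁, hlt⟩ := exists_half_lt_of_lt (by positivity) hsub
  exact ((ofReal_lt_ofReal_iff_of_nonneg (by positivity)).2 hlt).trans_le
    (ofReal_le_energy_of_mem hp₂ ha hb hc hε₀ hε₁)

lemma two_rpow_mul_eq_rpow (hp : p ≠ 0) {d : ℝ} (hd : 0 ≤ d) :
    (2 : ℝ) ^ (1 / p) * d = (d ^ (-p) / 2) ^ (-1 / p) := by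
  rw [Real.div_rpow (by positivity) zero_le_two, ← Real.rpow_mul hd,
    show -p * (-1 / p) = 1 by field_simp, Real.rpow_one, show -1 / p = -(1 / p) by ring,
    Real.rpow_neg zero_le_two, div_inv_eq_mul, mul_comm]

lemma two_rpow_mul_le_cap_iff (hp : p < 0) {d : ℝ} (hd : 0 ≤ d) (hK : energy p K ≠ ⊤) :
    (2 : ℝ) ^ (1 / p) * d ≤ cap p K ↔ ENNReal.ofReal (d ^ (-p) / 2) ≤ energy p K := by
  rw [cap, if_neg hp.ne, two_rpow_mul_eq_rpow hp.ne hd,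
    Real.rpow_le_rpow_iff (by positivity) toReal_nonneg (div_pos_of_neg_of_neg neg_one_lt_zero hp),
    ofReal_le_iff_le_toReal hK]

lemma cap_eq_two_rpow_mul_iff (hp : p < 0) {d : ℝ} (hd : 0 ≤ d) (hK : energy p K ≠ ⊤) :
    cap p K = (2 : ℝ) ^ (1 / p) * d ↔ energy p K = ENNReal.ofReal (d ^ (-p) / 2) := by
  rw [cap, if_neg hp.ne, two_rpow_mul_eq_rpow hp.ne hd,
    Real.rpow_left_inj toReal_nonneg (by positivity) (by simp [hp.ne]),
    ← toReal_ofReal (by positivity : 0 ≤ d ^ (-p) / 2), toReal_eq_toReal_iff' hK ofReal_ne_top,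
    toReal_ofReal (by positivity)]

end MetricSpace

section RealLine

variable {p : ℝ} {K : Set ℝ} {μ : Measure ℝ} {a b : ℝ}

lemma rpow_le_rpow_sub_one_mul {r D s : ℝ} (hr : 0 ≤ r) (hrD : r ≤ D) (hs : 1 ≤ s) :
    r ^ s ≤ D ^ (s - 1) * r := by
  calc r ^ s = r ^ (s - 1) * r := by
        rw [← Real.rpow_add_one' hr (by linarith), sub_add_cancel]
    _ ≤ D ^ (s - 1) * r := by gcongr

lemma ofReal_mul_dist_add_two_mul_le {x y : ℝ} (hx : x ∈ Icc a b) (hy : y ∈ Icc a b) :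
    ENNReal.ofReal (b - a) * ENNReal.ofReal (dist x y)
        + 2 * (ENNReal.ofReal (x - a) * ENNReal.ofReal (y - a))
      ≤ ENNReal.ofReal (b - a) * ENNReal.ofReal (x - a)
        + ENNReal.ofReal (b - a) * ENNReal.ofReal (y - a) := by
  obtain ⟨hxa, hxb⟩ := hx
  obtain ⟨hya, hyb⟩ := hy
  have hreal : (b - a) * dist x y + 2 * ((x - a) * (y - a))
      ≤ (b - a) * (x - a) + (b - a) * (y - a) := by
    rw [Real.dist_eq]
    rcases abs_cases (x - y) with ⟨h, _⟩ | ⟨h, _⟩ <;> rw [h] <;> nlinarith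
  have hd : 0 ≤ b - a := by linarith
  rw [← ofReal_mul hd, ← ofReal_mul (sub_nonneg.2 hxa), ← ofReal_ofNat 2,
    ← ofReal_mul zero_le_two, ← ofReal_add (by positivity) (by positivity),
    ← ofReal_mul hd, ← ofReal_mul hd, ← ofReal_add (by positivity) (by positivity)]
  exact ofReal_le_ofReal hreal

lemma mul_lintegral_dist_add_le [IsProbabilityMeasure μ] (hμ : μ (Icc a b)ᶜ = 0) :
    ENNReal.ofReal (b - a) * ∫⁻ z, ENNReal.ofReal (dist z.1 z.2) ∂μ.prod μ
        + 2 * ((∫⁻ x, ENNReal.ofReal (x - a) ∂μ) * ∫⁻ x, ENNReal.ofReal (x - a) ∂μ)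
      ≤ ENNReal.ofReal (b - a) * ∫⁻ x, ENNReal.ofReal (x - a) ∂μ
        + ENNReal.ofReal (b - a) * ∫⁻ x, ENNReal.ofReal (x - a) ∂μ := by
  set D := ENNReal.ofReal (b - a)
  have hf : Measurable fun x : ℝ => ENNReal.ofReal (x - a) := by fun_prop
  have hmarg₁ : ∫⁻ z, ENNReal.ofReal (z.1 - a) ∂μ.prod μ = ∫⁻ x, ENNReal.ofReal (x - a) ∂μ := by
    simpa using lintegral_prod_mul (μ := μ) (ν := μ) hf.aemeasurable aemeasurable_const (g := 1)
  have hmarg₂ : ∫⁻ z, ENNReal.ofReal (z.2 - a) ∂μ.prod μ = ∫⁻ x, ENNReal.ofReal (x - a) ∂μ := by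
    simpa using lintegral_prod_mul (μ := μ) (ν := μ) aemeasurable_const hf.aemeasurable (f := 1)
  calc
    _ = ∫⁻ z, D * ENNReal.ofReal (dist z.1 z.2)
        + 2 * (ENNReal.ofReal (z.1 - a) * ENNReal.ofReal (z.2 - a)) ∂μ.prod μ := by
      rw [lintegral_add_left (by fun_prop), lintegral_const_mul _ (by fun_prop),
        lintegral_const_mul _ (by fun_prop), lintegral_prod_mul hf.aemeasurable hf.aemeasurable]
    _ ≤ ∫⁻ z, D * ENNReal.ofReal (z.1 - a) + D * ENNReal.ofReal (z.2 - a) ∂μ.prod μ :=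
      lintegral_mono_ae ((ae_mem_prod_of_mem_probOn ⟨‹_›, hμ⟩).mono fun z hz =>
        ofReal_mul_dist_add_two_mul_le hz.1 hz.2)
    _ = _ := by
      rw [lintegral_add_left (by fun_prop), lintegral_const_mul _ (by fun_prop),
        lintegral_const_mul _ (by fun_prop), hmarg₁, hmarg₂]

lemma lintegral_dist_le_half [IsProbabilityMeasure μ] (hμ : μ (Icc a b)ᶜ = 0) :
    ∫⁻ z, ENNReal.ofReal (dist z.1 z.2) ∂μ.prod μ ≤ ENNReal.ofReal ((b - a) / 2) := by
  have hab : a ≤ b := by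
    by_contra h
    simp [Icc_eq_empty h] at hμ
  have hT : ∫⁻ x, ENNReal.ofReal (x - a) ∂μ ≤ ENNReal.ofReal (b - a) :=
    (lintegral_mono_ae ((ae_iff.2 hμ).mono fun x hx =>
      ofReal_le_ofReal (sub_le_sub_right hx.2 a))).trans_eq (by simp)
  have hJ : ∫⁻ z, ENNReal.ofReal (dist z.1 z.2) ∂μ.prod μ ≤ ENNReal.ofReal (b - a) :=
    (lintegral_mono_ae ((ae_mem_prod_of_mem_probOn ⟨‹_›, hμ⟩).mono fun z hz =>
      ofReal_le_ofReal (Real.dist_le_of_mem_Icc hz.1 hz.2))).trans_eq (by simp)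
  have hT_top := ne_top_of_le_ne_top ofReal_ne_top hT
  have hJ_top := ne_top_of_le_ne_top ofReal_ne_top hJ
  have hreal := toReal_mono (by finiteness) (mul_lintegral_dist_add_le hμ)
  rw [toReal_add (by finiteness) (by finiteness), toReal_add (by finiteness) (by finiteness)]
    at hreal
  replace hJ := toReal_mono ofReal_ne_top hJ
  simp only [toReal_mul, toReal_ofNat, toReal_ofReal (sub_nonneg.2 hab)] at hreal hJ
  rw [← ofReal_toReal hJ_top]
  -- with `T = ∫ (x - a) dμ` and `J` the mean distance:
  -- `(b - a) J ≤ 2 (b - a) T - 2 T² ≤ (b - a)² / 2`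
  exact ofReal_le_ofReal
    (by nlinarith [sq_nonneg (b - a - 2 * (∫⁻ x, ENNReal.ofReal (x - a) ∂μ).toReal)])

lemma energy_le_of_rpow_dist_le (hp : p < 0) (hab : a < b) (hK : K ⊆ Icc a b)
    (hker : ∀ x ∈ K, ∀ y ∈ K, dist x y ^ (-p) ≤ (b - a) ^ (-p - 1) * dist x y) :
    energy p K ≤ ENNReal.ofReal ((b - a) ^ (-p) / 2) := by
  rw [energy_of_neg hp]
  refine iSup₂_le fun μ hμ => ?_
  have : IsProbabilityMeasure μ := hμ.1
  calc energyOf p μ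
      ≤ ∫⁻ z, ENNReal.ofReal ((b - a) ^ (-p - 1)) * ENNReal.ofReal (dist z.1 z.2) ∂μ.prod μ := by
        refine lintegral_mono_ae ((ae_mem_prod_of_mem_probOn hμ).mono fun z hz => ?_)
        rw [ofReal_rpow_of_nonneg dist_nonneg (by linarith), ← ofReal_mul (by positivity)]
        exact ofReal_le_ofReal (hker _ hz.1 _ hz.2)
    _ ≤ ENNReal.ofReal ((b - a) ^ (-p - 1)) * ENNReal.ofReal ((b - a) / 2) := by
        rw [lintegral_const_mul _ (by fun_prop)]
        gcongr
        exact lintegral_dist_le_half (measure_mono_null (compl_subset_compl.2 hK) hμ.2)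
    _ = ENNReal.ofReal ((b - a) ^ (-p) / 2) := by
        have : b - a ≠ 0 := sub_ne_zero.2 hab.ne'
        rw [← ofReal_mul (by positivity), Real.rpow_sub_one this]
        field_simp

lemma energy_le_of_subset_Icc (hp : p ≤ -1) (hab : a < b) (hK : K ⊆ Icc a b) :
    energy p K ≤ ENNReal.ofReal ((b - a) ^ (-p) / 2) :=
  energy_le_of_rpow_dist_le (by linarith) hab hK fun _ hx _ hy =>
    rpow_le_rpow_sub_one_mul dist_nonneg (Real.dist_le_of_mem_Icc (hK hx) (hK hy)) (by linarith)

lemma energy_le_of_subset_pair (hp : p < 0) (hab : a < b) (hK : K ⊆ {a, b}) :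
    energy p K ≤ ENNReal.ofReal ((b - a) ^ (-p) / 2) := by
  have hdist : dist a b ^ (-p) = (b - a) ^ (-p - 1) * dist a b := by
    have : b - a ≠ 0 := sub_ne_zero.2 hab.ne'
    rw [Real.dist_eq, abs_sub_comm, abs_of_pos (by linarith), Real.rpow_sub_one this]
    field_simp
  refine energy_le_of_rpow_dist_le hp hab
    (hK.trans (insert_subset ⟨le_rfl, hab.le⟩ (by simp [hab.le]))) fun x hx y hy => ?_
  have hx' : x = a ∨ x = b := hK hx
  have hy' : y = a ∨ y = b := hK hy
  rcases hx' with hx' | hx' <;> rcases hy' with hy' | hy' <;>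
    simp [hx', hy', hdist, dist_comm b a, Real.zero_rpow (neg_ne_zero.2 hp.ne)]

lemma _root_.IsCompact.exists_subset_Icc_diam_eq (hK : IsCompact K) (hK₂ : K.Nontrivial) :
    ∃ a ∈ K, ∃ b ∈ K, a < b ∧ K ⊆ Icc a b ∧ diam K = b - a := by
  have hdiam := Real.diam_eq hK.isBounded
  refine ⟨sInf K, hK.sInf_mem hK₂.nonempty, sSup K, hK.sSup_mem hK₂.nonempty, ?_,
    hK.isBounded.subset_Icc_sInf_sSup, hdiam⟩
  linarith [diam_pos hK₂ hK.isBounded]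

lemma ofReal_half_diam_rpow_le_energy (hp : p < 0) (hK : IsCompact K) (hK₂ : K.Nontrivial) :
    ENNReal.ofReal (diam K ^ (-p) / 2) ≤ energy p K := by
  obtain ⟨a, ha, b, hb, hab, -, hdiam⟩ := hK.exists_subset_Icc_diam_eq hK₂
  rw [hdiam, ← abs_of_pos (sub_pos.2 hab), abs_sub_comm, ← Real.dist_eq]
  exact ofReal_half_dist_rpow_le_energy hp ha hb

lemma energy_eq_of_le_neg_one (hp : p ≤ -1) (hK : IsCompact K) (hK₂ : K.Nontrivial) :
    energy p K = ENNReal.ofReal (diam K ^ (-p) / 2) := by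
  obtain ⟨a, -, b, -, hab, hsub, hdiam⟩ := hK.exists_subset_Icc_diam_eq hK₂
  refine le_antisymm ?_ (ofReal_half_diam_rpow_le_energy (by linarith) hK hK₂)
  exact hdiam ▸ energy_le_of_subset_Icc hp hab hsub

lemma exists_eq_pair_iff_subset_pair {α : Type*} {K : Set α} {a b : α} (ha : a ∈ K) (hb : b ∈ K)
    (hab : a ≠ b) : (∃ x y, x ≠ y ∧ K = {x, y}) ↔ K ⊆ {a, b} := by
  refine ⟨?_, fun h => ⟨a, b, hab, h.antisymm (insert_subset ha (singleton_subset_iff.2 hb))⟩⟩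
  rintro ⟨x, y, -, rfl⟩ z hz
  simp only [mem_insert_iff, mem_singleton_iff] at ha hb hz ⊢
  grind

lemma energy_eq_iff_exists_eq_pair (hp₁ : -1 < p) (hp₂ : p < 0) (hK : IsCompact K)
    (hK₂ : K.Nontrivial) :
    energy p K = ENNReal.ofReal (diam K ^ (-p) / 2) ↔ ∃ a b, a ≠ b ∧ K = {a, b} := by
  obtain ⟨a, ha, b, hb, hab, hsub, hdiam⟩ := hK.exists_subset_Icc_diam_eq hK₂
  have hdist : dist a b = b - a := by rw [Real.dist_eq, abs_sub_comm, abs_of_pos (sub_pos.2 hab)]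
  rw [exists_eq_pair_iff_subset_pair ha hb hab.ne, hdiam]
  refine ⟨fun heq c hc => ?_, fun hpair => (energy_le_of_subset_pair hp₂ hab hpair).antisymm
    (hdiam ▸ ofReal_half_diam_rpow_le_energy hp₂ hK hK₂)⟩
  by_contra hc'
  simp only [mem_insert_iff, mem_singleton_iff, not_or] at hc'
  have hlt := ofReal_half_dist_rpow_lt_energy hp₁ hp₂ ha hb hc (dist_pos.2 (Ne.symm hc'.1))
    (dist_pos.2 hc'.2)
  exact hlt.ne (hdist ▸ heq.symm)

end RealLine

end Riesz

/-- For `-1 < p < 0` and compact `K ⊆ ℝ` with more than one point: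
`cap_p(K) ≥ 2^(1/p)·diam K`, with equality iff `K` has exactly two points; hence for
`q ≤ -1` the ratio `cap_q(K)/cap_p(K)` is at most `2^(1/q-1/p)`, with equality iff `K`
has exactly two points. -/
theorem statement4 (p : ℝ) (hp1 : -1 < p) (hp2 : p < 0)
    (K : Set ℝ) (hK : IsCompact K) (hK2 : K.Nontrivial) :
    Riesz.cap p K ≥ (2 : ℝ) ^ (1 / p) * Metric.diam K ∧
    (Riesz.cap p K = (2 : ℝ) ^ (1 / p) * Metric.diam K ↔
      ∃ a b : ℝ, a ≠ b ∧ K = {a, b}) ∧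
    ∀ q : ℝ, q ≤ -1 →
      Riesz.cap q K / Riesz.cap p K ≤ (2 : ℝ) ^ (1 / q - 1 / p) ∧
      (Riesz.cap q K / Riesz.cap p K = (2 : ℝ) ^ (1 / q - 1 / p) ↔
        ∃ a b : ℝ, a ≠ b ∧ K = {a, b}) := by
  have hd : 0 < diam K := diam_pos hK2 hK.isBounded
  have hfin : Riesz.energy p K ≠ ⊤ := Riesz.energy_ne_top hp2 hK.isBounded
  have hcap_le : 2 ^ (1 / p) * diam K ≤ Riesz.cap p K :=
    (Riesz.two_rpow_mul_le_cap_iff hp2 hd.le hfin).2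
      (Riesz.ofReal_half_diam_rpow_le_energy hp2 hK hK2)
  have hcap_eq := (Riesz.cap_eq_two_rpow_mul_iff hp2 hd.le hfin).trans
    (Riesz.energy_eq_iff_exists_eq_pair hp1 hp2 hK hK2)
  refine ⟨hcap_le, hcap_eq, fun q hq => ?_⟩
  have hE := Riesz.energy_eq_of_le_neg_one hq hK hK2
  have hcap_q : Riesz.cap q K = 2 ^ (1 / q) * diam K :=
    (Riesz.cap_eq_two_rpow_mul_iff (by linarith) hd.le (hE ▸ ofReal_ne_top)).2 hE
  have hnum : 0 < (2 : ℝ) ^ (1 / q) * diam K := by positivity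
  have hden : 0 < (2 : ℝ) ^ (1 / p) * diam K := by positivity
  have hratio : (2 : ℝ) ^ (1 / q - 1 / p) = 2 ^ (1 / q) * diam K / (2 ^ (1 / p) * diam K) := by
    rw [Real.rpow_sub two_pos, mul_div_mul_right _ _ hd.ne']
  rw [hcap_q, hratio, ← hcap_eq]
  refine ⟨div_le_div_of_nonneg_left hnum.le hden hcap_le, ?_⟩
  rw [div_eq_div_iff (hden.trans_le hcap_le).ne' hden.ne', mul_right_inj' hnum.ne', eq_comm]
end

section
/- Assume p < q < 0. If T ⊂ ℝ² is a two-point set or a three-point set, then (1/2)^{1/p − 1/q} ≤ cap_q(T)/cap_p(T) ≤ (2/3)^{1/p − 1/q}. The lower bound is attained in particular by every two-point set, and the upper bound is attained if and only if T is a regular three-point set. -/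
open MeasureTheory Metric Set ENNReal Filter

/-- A regular three-point set in the plane: three points with equal positive
pairwise distances. -/
def IsRegularThreePoint (S : Set (EuclideanSpace ℝ (Fin 2))) : Prop :=
  ∃ x y z : EuclideanSpace ℝ (Fin 2), S = {x, y, z} ∧ 0 < dist x y ∧
    dist x y = dist y z ∧ dist x y = dist z x

/-!
A probability measure on a finite set `{P i}` is a weight vector `w` in the standard simplex,
and its `p`-energy is the quadratic form `∑ i j, w i * w j * d i j ^ r` with `r = -p > 0`, so
`V_p` is the maximum of this form over the simplex. Write `t = -q < s = -p`.

For the lower bound, the largest distance `M` satisfies `M ^ s ≤ 2 V_s` (put mass `1/2` on its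
two endpoints), and `d ^ s ≤ M ^ (s - t) * d ^ t` termwise gives `V_s ≤ M ^ (s - t) V_t`;
together they yield `(2 V_s) ^ (t / s) ≤ 2 V_t`.

For the upper bound, Hölder's inequality over the off-diagonal pairs gives
`V_t ≤ σ ^ (1 - t / s) * V_s ^ (t / s)` for the `t`-optimal weights, where
`σ = ∑_{i ≠ j} w i * w j = 1 - ∑ w i ^ 2 ≤ 1 - 1 / n`. Equality forces `σ = 1 - 1 / n`, i.e.
uniform weights, and then equality in Jensen's inequality for `x ↦ x ^ (s / t)` over the
distances forces all of them to be equal. Conversely an equidistant `n`-point set has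
`V_r = (1 - 1 / n) d ^ r`; for two points this is the value `1 / 2` of the lower bound.
-/

noncomputable section

namespace Riesz

section WeightedEnergy

variable {E ι : Type*} [PseudoMetricSpace E] [Fintype ι]

def weightedEnergy (r : ℝ) (P : ι → E) (w : ι → ℝ) : ℝ :=
  ∑ i, ∑ j, w i * w j * dist (P i) (P j) ^ r

def discreteEnergy (r : ℝ) (P : ι → E) : ℝ :=
  sSup (weightedEnergy r P '' stdSimplex ℝ ι)

variable {r : ℝ} {P : ι → E} {w : ι → ℝ}

lemma const_inv_card_mem_stdSimplex [Nonempty ι] :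
    (fun _ => (Fintype.card ι : ℝ)⁻¹) ∈ stdSimplex ℝ ι :=
  ⟨fun _ => by positivity, by simp⟩

lemma weightedEnergy_nonneg (hw : ∀ i, 0 ≤ w i) : 0 ≤ weightedEnergy r P w :=
  Finset.sum_nonneg fun i _ => Finset.sum_nonneg fun j _ =>
    mul_nonneg (mul_nonneg (hw i) (hw j)) (Real.rpow_nonneg dist_nonneg _)

lemma continuous_weightedEnergy (r : ℝ) (P : ι → E) : Continuous (weightedEnergy r P) := by
  unfold weightedEnergy
  fun_prop

lemma weightedEnergy_le_discreteEnergy (hw : w ∈ stdSimplex ℝ ι) :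
    weightedEnergy r P w ≤ discreteEnergy r P :=
  le_csSup ((isCompact_stdSimplex ℝ ι).image (continuous_weightedEnergy r P)).bddAbove
    (mem_image_of_mem _ hw)

lemma exists_weightedEnergy_eq_discreteEnergy [Nonempty ι] (r : ℝ) (P : ι → E) :
    ∃ w ∈ stdSimplex ℝ ι, weightedEnergy r P w = discreteEnergy r P :=
  ((isCompact_stdSimplex ℝ ι).image (continuous_weightedEnergy r P)).sSup_mem
    (Set.Nonempty.image _ ⟨_, const_inv_card_mem_stdSimplex⟩)

lemma discreteEnergy_nonneg [Nonempty ι] : 0 ≤ discreteEnergy r P := by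
  obtain ⟨w, hw, hwV⟩ := exists_weightedEnergy_eq_discreteEnergy r P
  exact hwV ▸ weightedEnergy_nonneg hw.1

lemma ofReal_weightedEnergy (hr : 0 ≤ r) (hw : ∀ i, 0 ≤ w i) :
    ENNReal.ofReal (weightedEnergy r P w) = ∑ i, ∑ j,
      ENNReal.ofReal (w i) * ENNReal.ofReal (w j) * ENNReal.ofReal (dist (P i) (P j)) ^ r := by
  have hww : ∀ i j, 0 ≤ w i * w j := fun i j => mul_nonneg (hw i) (hw j)
  rw [weightedEnergy, ENNReal.ofReal_sum_of_nonneg fun i _ => Finset.sum_nonneg fun j _ =>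
    mul_nonneg (hww i j) (Real.rpow_nonneg dist_nonneg _)]
  refine Finset.sum_congr rfl fun i _ => ?_
  rw [ENNReal.ofReal_sum_of_nonneg fun j _ => mul_nonneg (hww i j) (Real.rpow_nonneg dist_nonneg _)]
  refine Finset.sum_congr rfl fun j _ => ?_
  rw [ENNReal.ofReal_mul (hww i j), ENNReal.ofReal_mul (hw i),
    ENNReal.ofReal_rpow_of_nonneg dist_nonneg hr]

end WeightedEnergy

section DiscreteMeasures

variable {α κ : Type*} [MeasurableSpace α] {g : κ → α}

lemma prod_measure_compl_range_prodMap {μ : Measure α} [IsFiniteMeasure μ]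
    (hμ : μ (range g)ᶜ = 0) : (μ.prod μ) (range (Prod.map g g))ᶜ = 0 := by
  rw [range_prodMap, compl_prod_eq_union]
  refine measure_union_null ?_ ?_ <;> simp [Measure.prod_prod, hμ]

variable [Fintype κ] [MeasurableSingletonClass α]

lemma lintegral_eq_sum_of_measure_compl_range
    (hg : Function.Injective g) {ν : Measure α} (hν : ν (range g)ᶜ = 0) (f : α → ℝ≥0∞) :
    ∫⁻ x, f x ∂ν = ∑ k, ν {g k} * f (g k) := by
  classical
  have hrange : range g = ↑(Finset.univ.image g) := by simp
  rw [hrange] at hν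
  rw [← lintegral_add_compl f (Finset.univ.image g).measurableSet,
    setLIntegral_measure_zero _ _ hν, add_zero, lintegral_finset,
    Finset.sum_image fun a _ b _ h => hg h]
  exact Finset.sum_congr rfl fun k _ => mul_comm _ _

lemma weights_mem_stdSimplex (hg : Function.Injective g) {μ : Measure α}
    [IsProbabilityMeasure μ] (hμ : μ (range g)ᶜ = 0) :
    (fun k => (μ {g k}).toReal) ∈ stdSimplex ℝ κ := by
  refine ⟨fun k => ENNReal.toReal_nonneg, ?_⟩
  have h := lintegral_eq_sum_of_measure_compl_range hg hμ 1
  simp only [Pi.one_apply, lintegral_one, measure_univ, mul_one] at h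
  rw [← ENNReal.toReal_sum fun k _ => measure_ne_top μ _, ← h, ENNReal.toReal_one]

lemma exists_mem_probOn_range_weights [PseudoMetricSpace α] (hg : Function.Injective g)
    {w : κ → ℝ} (hw : w ∈ stdSimplex ℝ κ) :
    ∃ μ ∈ probOn (range g), ∀ k, (μ {g k}).toReal = w k := by
  classical
  refine ⟨∑ k, ENNReal.ofReal (w k) • Measure.dirac (g k), ⟨⟨?_⟩, ?_⟩, fun k => ?_⟩
  · simp [← ENNReal.ofReal_sum_of_nonneg fun k _ => hw.1 k, hw.2]
  · simp [Measure.dirac_apply' _ (finite_range g).measurableSet.compl]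
  · simp [Pi.single_apply, hg.eq_iff, ENNReal.toReal_ofReal (hw.1 k)]

variable [PseudoMetricSpace α]

lemma energyOf_eq_sum (p : ℝ) (hg : Function.Injective g) {μ : Measure α} [IsFiniteMeasure μ]
    (hμ : μ (range g)ᶜ = 0) :
    energyOf p μ = ∑ i, ∑ j, μ {g i} * μ {g j} * ENNReal.ofReal (dist (g i) (g j)) ^ (-p) := by
  rw [energyOf, lintegral_eq_sum_of_measure_compl_range (hg.prodMap hg)
    (prod_measure_compl_range_prodMap hμ), Fintype.sum_prod_type]
  simp [← singleton_prod_singleton, Measure.prod_prod]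

lemma energyOf_eq_ofReal_weightedEnergy {p : ℝ} (hp : p < 0) (hg : Function.Injective g)
    {μ : Measure α} [IsFiniteMeasure μ] (hμ : μ (range g)ᶜ = 0) :
    energyOf p μ = ENNReal.ofReal (weightedEnergy (-p) g fun k => (μ {g k}).toReal) := by
  rw [energyOf_eq_sum p hg hμ, ofReal_weightedEnergy (by linarith) fun k => ENNReal.toReal_nonneg]
  simp only [ENNReal.ofReal_toReal (measure_ne_top μ _)]

end DiscreteMeasures

section Capacity

variable {E ι : Type*} [MeasurableSpace E] [MeasurableSingletonClass E] [PseudoMetricSpace E]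
  [Fintype ι] [Nonempty ι] {P : ι → E}

lemma energy_range_eq {p : ℝ} (hp : p < 0) (hP : Function.Injective P) :
    energy p (range P) = ENNReal.ofReal (discreteEnergy (-p) P) := by
  rw [energy, if_pos hp]
  refine le_antisymm (iSup₂_le fun μ ⟨_, hμ⟩ => ?_) ?_
  · rw [energyOf_eq_ofReal_weightedEnergy hp hP hμ]
    exact ENNReal.ofReal_le_ofReal
      (weightedEnergy_le_discreteEnergy (weights_mem_stdSimplex hP hμ))
  · obtain ⟨w, hw, hwV⟩ := exists_weightedEnergy_eq_discreteEnergy (-p) P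
    obtain ⟨μ, hμ, hμw⟩ := exists_mem_probOn_range_weights hP hw
    have := hμ.1
    refine le_iSup₂_of_le μ hμ ?_
    rw [energyOf_eq_ofReal_weightedEnergy hp hP hμ.2, funext hμw, hwV]

lemma cap_range_eq {p : ℝ} (hp : p < 0) (hP : Function.Injective P) :
    cap p (range P) = discreteEnergy (-p) P ^ (-p)⁻¹ := by
  rw [cap, if_neg hp.ne, energy_range_eq hp hP, ENNReal.toReal_ofReal discreteEnergy_nonneg,
    neg_div, one_div, inv_neg]

end Capacity

section Bounds

variable {E ι : Type*} [PseudoMetricSpace E] [Fintype ι] {P : ι → E} {r s t : ℝ} {w : ι → ℝ}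

lemma sum_sum_eq_sum_add_sum_offDiag (f : ι → ι → ℝ) :
    ∑ i, ∑ j, f i j = ∑ i, f i i + ∑ x ∈ Finset.univ.offDiag, f x.1 x.2 := by
  classical
  rw [← Finset.sum_product', ← Finset.diag_union_offDiag,
    Finset.sum_union (Finset.disjoint_diag_offDiag _), Finset.diag, Finset.sum_map]
  rfl

lemma weightedEnergy_eq_sum_offDiag (hr : r ≠ 0) (P : ι → E) (w : ι → ℝ) :
    weightedEnergy r P w =
      ∑ x ∈ Finset.univ.offDiag, w x.1 * w x.2 * dist (P x.1) (P x.2) ^ r := by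
  simp [weightedEnergy, sum_sum_eq_sum_add_sum_offDiag, Real.zero_rpow hr]

lemma sum_offDiag_mul_eq (w : ι → ℝ) :
    ∑ x ∈ Finset.univ.offDiag, w x.1 * w x.2 = (∑ i, w i) ^ 2 - ∑ i, w i ^ 2 := by
  rw [sq, Finset.sum_mul_sum, sum_sum_eq_sum_add_sum_offDiag]
  simp [sq]

lemma one_sub_inv_card_pos [Nontrivial ι] : 0 < 1 - (Fintype.card ι : ℝ)⁻¹ :=
  sub_pos.2 (inv_lt_one_of_one_lt₀ (Nat.one_lt_cast.2 Fintype.one_lt_card))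

lemma sum_offDiag_mul_le [Nonempty ι] (hw : w ∈ stdSimplex ℝ ι) :
    ∑ x ∈ Finset.univ.offDiag, w x.1 * w x.2 ≤ 1 - (Fintype.card ι : ℝ)⁻¹ := by
  have hn : (0 : ℝ) < Fintype.card ι := Nat.cast_pos.2 Fintype.card_pos
  have h := sq_sum_le_card_mul_sum_sq (s := Finset.univ) (f := w)
  rw [hw.2, Finset.card_univ, one_pow] at h
  have hsq : (Fintype.card ι : ℝ)⁻¹ ≤ ∑ i, w i ^ 2 := by rwa [inv_le_iff_one_le_mul₀' hn]
  rw [sum_offDiag_mul_eq, hw.2]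
  linarith

lemma eq_const_of_sum_offDiag_mul_eq [Nonempty ι] (hw : w ∈ stdSimplex ℝ ι)
    (h : ∑ x ∈ Finset.univ.offDiag, w x.1 * w x.2 = 1 - (Fintype.card ι : ℝ)⁻¹) :
    w = fun _ => (Fintype.card ι : ℝ)⁻¹ := by
  set c := (Fintype.card ι : ℝ)⁻¹
  have hn : (Fintype.card ι : ℝ) ≠ 0 := Nat.cast_ne_zero.2 Fintype.card_ne_zero
  have hvar : ∑ i, (w i - c) ^ 2 = ∑ i, w i ^ 2 - c := by
    have hc : ∑ _i : ι, c ^ 2 = c := by simp [c, sq]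
    simp only [sub_sq, Finset.sum_add_distrib, Finset.sum_sub_distrib, ← Finset.mul_sum,
      ← Finset.sum_mul, hw.2, hc]
    ring
  rw [sum_offDiag_mul_eq, hw.2] at h
  have hzero := (Finset.sum_eq_zero_iff_of_nonneg fun i _ => sq_nonneg (w i - c)).1
    (by rw [hvar]; linarith)
  funext i
  exact sub_eq_zero.1 (pow_eq_zero_iff two_ne_zero |>.1 (hzero i (Finset.mem_univ i)))

lemma weightedEnergy_le_mul_rpow (ht : 0 < t) (hts : t ≤ s) (hw : ∀ i, 0 ≤ w i) :
    weightedEnergy t P w ≤ (∑ x ∈ Finset.univ.offDiag, w x.1 * w x.2) ^ (1 - t / s) *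
      weightedEnergy s P w ^ (t / s) := by
  have hs : 0 < s := ht.trans_le hts
  have hpow : ∀ x : ι × ι, (dist (P x.1) (P x.2) ^ t) ^ (s / t) = dist (P x.1) (P x.2) ^ s :=
    fun x => by rw [← Real.rpow_mul dist_nonneg, mul_div_cancel₀ _ ht.ne']
  have holder := Real.inner_le_weight_mul_Lp_of_nonneg Finset.univ.offDiag
    ((one_le_div ht).2 hts) (fun x => w x.1 * w x.2) (fun x => dist (P x.1) (P x.2) ^ t)
    (fun x => mul_nonneg (hw x.1) (hw x.2)) (fun x => Real.rpow_nonneg dist_nonneg _)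
  simp only [hpow, inv_div] at holder
  rwa [weightedEnergy_eq_sum_offDiag ht.ne', weightedEnergy_eq_sum_offDiag hs.ne']

lemma weightedEnergy_le_rpow_mul_weightedEnergy {M : ℝ} (hM : ∀ i j, dist (P i) (P j) ≤ M)
    (ht : 0 < t) (hts : t ≤ s) (hw : ∀ i, 0 ≤ w i) :
    weightedEnergy s P w ≤ M ^ (s - t) * weightedEnergy t P w := by
  rw [weightedEnergy, weightedEnergy, Finset.mul_sum]
  refine Finset.sum_le_sum fun i _ => ?_
  rw [Finset.mul_sum]
  refine Finset.sum_le_sum fun j _ => ?_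
  have hd := dist_nonneg (x := P i) (y := P j)
  calc w i * w j * dist (P i) (P j) ^ s
      = w i * w j * (dist (P i) (P j) ^ t * dist (P i) (P j) ^ (s - t)) := by
        rw [← Real.rpow_add' hd (by linarith), add_sub_cancel]
    _ ≤ w i * w j * (dist (P i) (P j) ^ t * M ^ (s - t)) := by
        gcongr
        · exact mul_nonneg (hw i) (hw j)
        · exact hM i j
    _ = M ^ (s - t) * (w i * w j * dist (P i) (P j) ^ t) := by ring

lemma rpow_dist_le_two_mul_discreteEnergy (hs : 0 < s) (i j : ι) :
    dist (P i) (P j) ^ s ≤ 2 * discreteEnergy s P := by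
  classical
  have : Nonempty ι := ⟨i⟩
  rcases eq_or_ne i j with rfl | hij
  · simpa [Real.zero_rpow hs.ne'] using discreteEnergy_nonneg
  set w : ι → ℝ := Pi.single i (1 / 2) + Pi.single j (1 / 2)
  have hw : w ∈ stdSimplex ℝ ι := by
    refine ⟨fun k => ?_, ?_⟩
    · simp only [w, Pi.add_apply, Pi.single_apply]; split_ifs <;> norm_num
    · simp [w, Finset.sum_add_distrib]; norm_num
  have hwi : w i = 1 / 2 := by simp [w, hij.symm]
  have hwj : w j = 1 / 2 := by simp [w, hij]
  have hpair : {(i, j), (j, i)} ⊆ Finset.univ.offDiag := by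
    simp [Finset.insert_subset_iff, hij, hij.symm]
  calc dist (P i) (P j) ^ s
      = 2 * ∑ x ∈ {(i, j), (j, i)}, w x.1 * w x.2 * dist (P x.1) (P x.2) ^ s := by
        rw [Finset.sum_pair (by simp [hij]), hwi, hwj, dist_comm (P j)]; ring
    _ ≤ 2 * weightedEnergy s P w := by
        rw [weightedEnergy_eq_sum_offDiag hs.ne']
        gcongr
        exact fun x _ _ =>
          mul_nonneg (mul_nonneg (hw.1 x.1) (hw.1 x.2)) (Real.rpow_nonneg dist_nonneg _)
    _ ≤ 2 * discreteEnergy s P := by gcongr; exact weightedEnergy_le_discreteEnergy hw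

lemma rpow_div_le_of_le_mul {M X Y : ℝ} (ht : 0 < t) (hts : t ≤ s) (hM : 0 ≤ M)
    (hMX : M ^ s ≤ X) (hXY : X ≤ M ^ (s - t) * Y) (hY : 0 ≤ Y) : X ^ (t / s) ≤ Y := by
  have hs : 0 < s := ht.trans_le hts
  have hX : 0 ≤ X := (Real.rpow_nonneg hM s).trans hMX
  set m := X ^ s⁻¹
  have hm : 0 ≤ m := Real.rpow_nonneg hX _
  have hMm : M ≤ m := (Real.le_rpow_inv_iff_of_pos hM hX hs).2 hMX
  rw [div_eq_inv_mul, Real.rpow_mul hX]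
  change m ^ t ≤ Y
  rcases hm.eq_or_lt with hm0 | hm0
  · rw [← hm0, Real.zero_rpow ht.ne']
    exact hY
  refine le_of_mul_le_mul_right ?_ (Real.rpow_pos_of_pos hm0 (s - t))
  calc m ^ t * m ^ (s - t) = X := by
        rw [← Real.rpow_add hm0, add_sub_cancel, Real.rpow_inv_rpow hX hs.ne']
    _ ≤ M ^ (s - t) * Y := hXY
    _ ≤ m ^ (s - t) * Y := by gcongr
    _ = Y * m ^ (s - t) := mul_comm _ _

lemma two_mul_discreteEnergy_rpow_le [Nonempty ι] (ht : 0 < t) (hts : t ≤ s) :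
    (2 * discreteEnergy s P) ^ (t / s) ≤ 2 * discreteEnergy t P := by
  have hs : 0 < s := ht.trans_le hts
  obtain ⟨⟨i, j⟩, hmax⟩ := Finite.exists_max fun x : ι × ι => dist (P x.1) (P x.2)
  obtain ⟨w, hw, hwV⟩ := exists_weightedEnergy_eq_discreteEnergy s P
  refine rpow_div_le_of_le_mul ht hts dist_nonneg
    (rpow_dist_le_two_mul_discreteEnergy hs i j) ?_
    (mul_nonneg zero_le_two discreteEnergy_nonneg)
  calc 2 * discreteEnergy s P
      ≤ 2 * (dist (P i) (P j) ^ (s - t) * weightedEnergy t P w) := by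
        rw [← hwV]
        gcongr
        exact weightedEnergy_le_rpow_mul_weightedEnergy (fun a b => hmax (a, b)) ht hts hw.1
    _ ≤ dist (P i) (P j) ^ (s - t) * (2 * discreteEnergy t P) := by
        rw [mul_left_comm]
        gcongr
        exact weightedEnergy_le_discreteEnergy hw

lemma discreteEnergy_le_rpow_mul_rpow [Nonempty ι] (ht : 0 < t) (hts : t ≤ s) :
    discreteEnergy t P ≤
      (1 - (Fintype.card ι : ℝ)⁻¹) ^ (1 - t / s) * discreteEnergy s P ^ (t / s) := by
  have hs : 0 < s := ht.trans_le hts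
  obtain ⟨w, hw, hwV⟩ := exists_weightedEnergy_eq_discreteEnergy t P
  rw [← hwV]
  refine (weightedEnergy_le_mul_rpow ht hts hw.1).trans ?_
  have hσ : 0 ≤ ∑ x ∈ Finset.univ.offDiag, w x.1 * w x.2 :=
    Finset.sum_nonneg fun x _ => mul_nonneg (hw.1 x.1) (hw.1 x.2)
  have hQ : 0 ≤ weightedEnergy s P w := weightedEnergy_nonneg hw.1
  exact mul_le_mul
    (Real.rpow_le_rpow hσ (sum_offDiag_mul_le hw) (sub_nonneg.2 ((div_le_one hs).2 hts)))
    (Real.rpow_le_rpow hQ (weightedEnergy_le_discreteEnergy hw) (div_nonneg ht.le hs.le))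
    (Real.rpow_nonneg hQ _) (Real.rpow_nonneg (hσ.trans (sum_offDiag_mul_le hw)) _)

lemma half_rpow_mul_discreteEnergy_rpow_le [Nonempty ι] (ht : 0 < t) (hts : t ≤ s) :
    (1 / 2) ^ (1 - t / s) * discreteEnergy s P ^ (t / s) ≤ discreteEnergy t P := by
  have h := two_mul_discreteEnergy_rpow_le (P := P) ht hts
  have h2 : (0 : ℝ) < 2 ^ (t / s) := Real.rpow_pos_of_pos two_pos _
  rw [Real.mul_rpow zero_le_two discreteEnergy_nonneg] at h
  rw [Real.rpow_sub (by norm_num), Real.rpow_one, Real.div_rpow zero_le_one zero_le_two,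
    Real.one_rpow]
  field_simp
  linarith

lemma weightedEnergy_eq_rpow_mul_of_pairwise {d : ℝ} (hr : r ≠ 0)
    (hd : Pairwise fun i j => dist (P i) (P j) = d) (w : ι → ℝ) :
    weightedEnergy r P w = d ^ r * ∑ x ∈ Finset.univ.offDiag, w x.1 * w x.2 := by
  rw [weightedEnergy_eq_sum_offDiag hr, Finset.mul_sum]
  refine Finset.sum_congr rfl fun x hx => ?_
  rw [hd (Finset.mem_offDiag.1 hx).2.2]
  ring

lemma sum_offDiag_const_inv_card [Nonempty ι] :
    ∑ _x ∈ (Finset.univ : Finset ι).offDiag, (Fintype.card ι : ℝ)⁻¹ * (Fintype.card ι : ℝ)⁻¹ =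
      1 - (Fintype.card ι : ℝ)⁻¹ := by
  have hn : (Fintype.card ι : ℝ) ≠ 0 := Nat.cast_ne_zero.2 Fintype.card_ne_zero
  have h := sum_offDiag_mul_eq fun _ : ι => (Fintype.card ι : ℝ)⁻¹
  rw [h, const_inv_card_mem_stdSimplex.2]
  simp only [Finset.sum_const, Finset.card_univ, nsmul_eq_mul]
  field_simp

lemma discreteEnergy_of_pairwise_dist_eq [Nontrivial ι] {d : ℝ} (hr : 0 < r)
    (hd : Pairwise fun i j => dist (P i) (P j) = d) :
    discreteEnergy r P = (1 - (Fintype.card ι : ℝ)⁻¹) * d ^ r := by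
  obtain ⟨i, j, hij⟩ := exists_pair_ne ι
  have hd0 : 0 ≤ d ^ r := Real.rpow_nonneg (hd hij ▸ dist_nonneg) r
  apply le_antisymm
  · obtain ⟨w, hw, hwV⟩ := exists_weightedEnergy_eq_discreteEnergy r P
    rw [← hwV, weightedEnergy_eq_rpow_mul_of_pairwise hr.ne' hd, mul_comm]
    exact mul_le_mul_of_nonneg_right (sum_offDiag_mul_le hw) hd0
  · have hu := weightedEnergy_le_discreteEnergy (r := r) (P := P) const_inv_card_mem_stdSimplex
    rwa [weightedEnergy_eq_rpow_mul_of_pairwise hr.ne' hd, sum_offDiag_const_inv_card,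
      mul_comm] at hu

def distPowMean (r : ℝ) (P : ι → E) : ℝ :=
  ((Finset.univ : Finset ι).offDiag.card : ℝ)⁻¹ *
    ∑ x ∈ Finset.univ.offDiag, dist (P x.1) (P x.2) ^ r

lemma distPowMean_nonneg : 0 ≤ distPowMean r P :=
  mul_nonneg (inv_nonneg.2 (Nat.cast_nonneg _))
    (Finset.sum_nonneg fun _ _ => Real.rpow_nonneg dist_nonneg _)

lemma weightedEnergy_const_inv_card [Nontrivial ι] (hr : r ≠ 0) :
    weightedEnergy r P (fun _ => (Fintype.card ι : ℝ)⁻¹) =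
      (1 - (Fintype.card ι : ℝ)⁻¹) * distPowMean r P := by
  have hn : (1 : ℝ) < Fintype.card ι := Nat.one_lt_cast.2 Fintype.one_lt_card
  rw [weightedEnergy_eq_sum_offDiag hr, ← Finset.mul_sum, distPowMean, Finset.offDiag_card,
    Finset.card_univ, Nat.cast_sub (Nat.le_mul_self _), Nat.cast_mul, ← mul_assoc]
  congr 1
  have : (Fintype.card ι : ℝ) - 1 ≠ 0 := by linarith
  field_simp

lemma exists_pairwise_dist_eq_of_rpow_mean_le [Nontrivial ι] (ht : 0 < t) (hts : t < s)
    (h : distPowMean s P ^ (t / s) ≤ distPowMean t P) :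
    ∃ d, Pairwise fun i j => dist (P i) (P j) = d := by
  obtain ⟨i, j, hij⟩ := exists_pair_ne ι
  have hs : 0 < s := ht.trans hts
  have hmean : 0 ≤ distPowMean s P := distPowMean_nonneg
  unfold distPowMean at h hmean
  set N : ℝ := ((Finset.univ : Finset ι).offDiag.card : ℝ)
  have hN : 0 < N := Nat.cast_pos.2 (Finset.card_pos.2 ⟨(i, j), by simp [hij]⟩)
  have hpow : ∀ x : ι × ι, (dist (P x.1) (P x.2) ^ t) ^ (s / t) = dist (P x.1) (P x.2) ^ s :=
    fun x => by rw [← Real.rpow_mul dist_nonneg, mul_div_cancel₀ _ ht.ne']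
  have hjensen : ∑ x ∈ Finset.univ.offDiag, N⁻¹ • (dist (P x.1) (P x.2) ^ t) ^ (s / t) ≤
      (∑ x ∈ Finset.univ.offDiag, N⁻¹ • dist (P x.1) (P x.2) ^ t) ^ (s / t) := by
    simp only [smul_eq_mul, ← Finset.mul_sum, hpow]
    calc N⁻¹ * ∑ x ∈ Finset.univ.offDiag, dist (P x.1) (P x.2) ^ s
        = ((N⁻¹ * ∑ x ∈ Finset.univ.offDiag, dist (P x.1) (P x.2) ^ s) ^ (t / s)) ^ (s / t) := by
          rw [← Real.rpow_mul hmean, div_mul_div_cancel₀' ht.ne', div_self hs.ne', Real.rpow_one]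
      _ ≤ (N⁻¹ * ∑ x ∈ Finset.univ.offDiag, dist (P x.1) (P x.2) ^ t) ^ (s / t) :=
          Real.rpow_le_rpow (Real.rpow_nonneg hmean _) h (div_nonneg hs.le ht.le)
  have hweights : ∑ _x ∈ (Finset.univ : Finset ι).offDiag, N⁻¹ = 1 := by
    rw [Finset.sum_const, nsmul_eq_mul, mul_inv_cancel₀ hN.ne']
  have hall := (strictConvexOn_rpow ((one_lt_div ht).2 hts)).eq_of_le_map_sum
    (p := fun x : ι × ι => dist (P x.1) (P x.2) ^ t) (fun _ _ => inv_pos.2 hN) hweights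
    (fun x _ => mem_Ici.2 (Real.rpow_nonneg dist_nonneg _)) hjensen
  refine ⟨dist (P i) (P j), fun k l hkl => ?_⟩
  exact (Real.rpow_left_inj dist_nonneg dist_nonneg ht.ne').1
    (hall (j := (k, l)) (by simpa using hkl) (k := (i, j)) (by simpa using hij))

lemma weightedEnergy_const_inv_card_eq_of_discreteEnergy_eq [Nontrivial ι] (ht : 0 < t)
    (hts : t < s) (hVs : 0 < discreteEnergy s P)
    (h : discreteEnergy t P =
      (1 - (Fintype.card ι : ℝ)⁻¹) ^ (1 - t / s) * discreteEnergy s P ^ (t / s)) :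
    weightedEnergy t P (fun _ => (Fintype.card ι : ℝ)⁻¹) = discreteEnergy t P := by
  have hs : 0 < s := ht.trans hts
  have hexp : 0 < 1 - t / s := sub_pos.2 ((div_lt_one hs).2 hts)
  obtain ⟨w, hw, hwV⟩ := exists_weightedEnergy_eq_discreteEnergy t P
  have hσ0 : 0 ≤ ∑ x ∈ Finset.univ.offDiag, w x.1 * w x.2 :=
    Finset.sum_nonneg fun x _ => mul_nonneg (hw.1 x.1) (hw.1 x.2)
  have hσ : ∑ x ∈ Finset.univ.offDiag, w x.1 * w x.2 = 1 - (Fintype.card ι : ℝ)⁻¹ := by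
    refine (sum_offDiag_mul_le hw).antisymm (not_lt.1 fun hlt => h.not_lt ?_)
    calc discreteEnergy t P
        ≤ (∑ x ∈ Finset.univ.offDiag, w x.1 * w x.2) ^ (1 - t / s) *
            weightedEnergy s P w ^ (t / s) := hwV ▸ weightedEnergy_le_mul_rpow ht hts.le hw.1
      _ ≤ (∑ x ∈ Finset.univ.offDiag, w x.1 * w x.2) ^ (1 - t / s) *
            discreteEnergy s P ^ (t / s) := by
          gcongr
          · exact weightedEnergy_nonneg hw.1
          · exact weightedEnergy_le_discreteEnergy hw
      _ < (1 - (Fintype.card ι : ℝ)⁻¹) ^ (1 - t / s) * discreteEnergy s P ^ (t / s) := by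
          gcongr
  rwa [eq_const_of_sum_offDiag_mul_eq hw hσ] at hwV

lemma exists_pairwise_dist_eq_of_discreteEnergy_eq [Nontrivial ι] (ht : 0 < t) (hts : t < s)
    (hVs : 0 < discreteEnergy s P)
    (h : discreteEnergy t P =
      (1 - (Fintype.card ι : ℝ)⁻¹) ^ (1 - t / s) * discreteEnergy s P ^ (t / s)) :
    ∃ d, Pairwise fun i j => dist (P i) (P j) = d := by
  have hκ : 0 < 1 - (Fintype.card ι : ℝ)⁻¹ := one_sub_inv_card_pos
  have hu : (1 - (Fintype.card ι : ℝ)⁻¹) ^ (1 - t / s) *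
      weightedEnergy s P (fun _ => (Fintype.card ι : ℝ)⁻¹) ^ (t / s) ≤
      weightedEnergy t P (fun _ => (Fintype.card ι : ℝ)⁻¹) := by
    rw [weightedEnergy_const_inv_card_eq_of_discreteEnergy_eq ht hts hVs h, h]
    have hunif := const_inv_card_mem_stdSimplex (ι := ι)
    gcongr
    · exact weightedEnergy_nonneg hunif.1
    · exact div_nonneg ht.le (ht.trans hts).le
    · exact weightedEnergy_le_discreteEnergy hunif
  rw [weightedEnergy_const_inv_card (ht.trans hts).ne', weightedEnergy_const_inv_card ht.ne',
    Real.mul_rpow hκ.le distPowMean_nonneg, ← mul_assoc, ← Real.rpow_add hκ, sub_add_cancel,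
    Real.rpow_one] at hu
  exact exists_pairwise_dist_eq_of_rpow_mean_le ht hts (le_of_mul_le_mul_left hu hκ)

end Bounds

section CapacityRatio

variable {s t κ X Y : ℝ}

lemma rpow_sub_inv_mul_rpow_inv_rpow (hκ : 0 < κ) (hY : 0 ≤ Y) (ht : 0 < t) :
    (κ ^ (t⁻¹ - s⁻¹) * Y ^ s⁻¹) ^ t = κ ^ (1 - t / s) * Y ^ (t / s) := by
  rw [Real.mul_rpow (Real.rpow_nonneg hκ.le _) (Real.rpow_nonneg hY _), ← Real.rpow_mul hκ.le,
    ← Real.rpow_mul hY, sub_mul, inv_mul_cancel₀ ht.ne', inv_mul_eq_div, div_eq_inv_mul t]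

lemma rpow_inv_div_rpow_inv_le_iff (hκ : 0 < κ) (hX : 0 ≤ X) (hY : 0 < Y) (ht : 0 < t) :
    X ^ t⁻¹ / Y ^ s⁻¹ ≤ κ ^ (t⁻¹ - s⁻¹) ↔ X ≤ κ ^ (1 - t / s) * Y ^ (t / s) := by
  rw [div_le_iff₀ (Real.rpow_pos_of_pos hY _), Real.rpow_inv_le_iff_of_pos hX
    (mul_nonneg (Real.rpow_nonneg hκ.le _) (Real.rpow_nonneg hY.le _)) ht,
    rpow_sub_inv_mul_rpow_inv_rpow hκ hY.le ht]

lemma le_rpow_inv_div_rpow_inv_iff (hκ : 0 < κ) (hX : 0 ≤ X) (hY : 0 < Y) (ht : 0 < t) :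
    κ ^ (t⁻¹ - s⁻¹) ≤ X ^ t⁻¹ / Y ^ s⁻¹ ↔ κ ^ (1 - t / s) * Y ^ (t / s) ≤ X := by
  rw [le_div_iff₀ (Real.rpow_pos_of_pos hY _), Real.le_rpow_inv_iff_of_pos
    (mul_nonneg (Real.rpow_nonneg hκ.le _) (Real.rpow_nonneg hY.le _)) hX ht,
    rpow_sub_inv_mul_rpow_inv_rpow hκ hY.le ht]

variable {E ι : Type*} [MetricSpace E] [Fintype ι] [Nontrivial ι] {P : ι → E} {p q : ℝ}

lemma discreteEnergy_pos (hP : Function.Injective P) (hs : 0 < s) : 0 < discreteEnergy s P := by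
  obtain ⟨i, j, hij⟩ := exists_pair_ne ι
  have hd : 0 < dist (P i) (P j) ^ s := Real.rpow_pos_of_pos (dist_pos.2 (hP.ne hij)) s
  linarith [rpow_dist_le_two_mul_discreteEnergy (P := P) hs i j]

lemma one_div_sub_one_div_eq (p q : ℝ) : 1 / p - 1 / q = (-q)⁻¹ - (-p)⁻¹ := by
  rw [inv_neg, inv_neg, one_div, one_div]
  ring

variable [MeasurableSpace E] [MeasurableSingletonClass E]

lemma cap_range_div_cap_range (hpq : p < q) (hq : q < 0) (hP : Function.Injective P) :
    cap q (range P) / cap p (range P) =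
      discreteEnergy (-q) P ^ (-q)⁻¹ / discreteEnergy (-p) P ^ (-p)⁻¹ := by
  rw [cap_range_eq (hpq.trans hq) hP, cap_range_eq hq hP]

theorem half_rpow_le_cap_div_cap (hpq : p < q) (hq : q < 0) (hP : Function.Injective P) :
    (1 / 2) ^ (1 / p - 1 / q) ≤ cap q (range P) / cap p (range P) := by
  rw [cap_range_div_cap_range hpq hq hP, one_div_sub_one_div_eq,
    le_rpow_inv_div_rpow_inv_iff one_half_pos discreteEnergy_nonneg
      (discreteEnergy_pos hP (by linarith)) (by linarith)]
  exact half_rpow_mul_discreteEnergy_rpow_le (by linarith) (by linarith)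

theorem cap_div_cap_le (hpq : p < q) (hq : q < 0) (hP : Function.Injective P) :
    cap q (range P) / cap p (range P) ≤
      (1 - (Fintype.card ι : ℝ)⁻¹) ^ (1 / p - 1 / q) := by
  have hκ : 0 < 1 - (Fintype.card ι : ℝ)⁻¹ := one_sub_inv_card_pos
  rw [cap_range_div_cap_range hpq hq hP, one_div_sub_one_div_eq,
    rpow_inv_div_rpow_inv_le_iff hκ discreteEnergy_nonneg
      (discreteEnergy_pos hP (by linarith)) (by linarith)]
  exact discreteEnergy_le_rpow_mul_rpow (by linarith) (by linarith)

theorem cap_div_cap_eq_iff (hpq : p < q) (hq : q < 0) (hP : Function.Injective P) :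
    cap q (range P) / cap p (range P) = (1 - (Fintype.card ι : ℝ)⁻¹) ^ (1 / p - 1 / q) ↔
      ∃ d, Pairwise fun i j => dist (P i) (P j) = d := by
  have hκ : 0 < 1 - (Fintype.card ι : ℝ)⁻¹ := one_sub_inv_card_pos
  have hVp := discreteEnergy_pos hP (s := -p) (by linarith)
  rw [cap_range_div_cap_range hpq hq hP, one_div_sub_one_div_eq, le_antisymm_iff,
    rpow_inv_div_rpow_inv_le_iff hκ discreteEnergy_nonneg hVp (by linarith),
    le_rpow_inv_div_rpow_inv_iff hκ discreteEnergy_nonneg hVp (by linarith), ← le_antisymm_iff]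
  constructor
  · exact exists_pairwise_dist_eq_of_discreteEnergy_eq (by linarith) (by linarith) hVp
  · rintro ⟨d, hd⟩
    obtain ⟨i, j, hij⟩ := exists_pair_ne ι
    have hd0 : 0 ≤ d := hd hij ▸ dist_nonneg
    rw [discreteEnergy_of_pairwise_dist_eq (by linarith) hd,
      discreteEnergy_of_pairwise_dist_eq (by linarith) hd, Real.mul_rpow hκ.le
      (Real.rpow_nonneg hd0 _), ← mul_assoc, ← Real.rpow_add hκ, sub_add_cancel, Real.rpow_one,
      ← Real.rpow_mul hd0, mul_div_cancel₀ _ (by linarith)]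

end CapacityRatio

section VecThree

variable {E : Type*} {x y z : E}

lemma injective_vec_three (hxy : x ≠ y) (hyz : y ≠ z) (hxz : x ≠ z) :
    Function.Injective (![x, y, z] : Fin 3 → E) := by
  intro i j hij
  fin_cases i <;> fin_cases j <;> simp_all [eq_comm]

lemma range_vec_three : range ![x, y, z] = {x, y, z} := by
  rw [Matrix.range_cons, Matrix.range_cons_cons_empty, singleton_union]

lemma exists_pairwise_dist_eq_vec_three_iff [PseudoMetricSpace E] :
    (∃ d, Pairwise fun i j => dist (![x, y, z] i) (![x, y, z] j) = d) ↔
      dist x y = dist y z ∧ dist x y = dist z x := by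
  constructor
  · rintro ⟨d, hd⟩
    exact ⟨(hd (i := 0) (j := 1) (by decide)).trans (hd (i := 1) (j := 2) (by decide)).symm,
      (hd (i := 0) (j := 1) (by decide)).trans (hd (i := 2) (j := 0) (by decide)).symm⟩
  · rintro ⟨hyz, hzx⟩
    refine ⟨dist x y, fun i j hij => ?_⟩
    fin_cases i <;> fin_cases j <;> simp_all [dist_comm]

end VecThree

section FewPoints

variable {E : Type*} [MeasurableSpace E] [MeasurableSingletonClass E] [MetricSpace E]
  {p q : ℝ} {x y z : E}

theorem cap_div_cap_pair (hpq : p < q) (hq : q < 0) (hxy : x ≠ y) :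
    cap q {x, y} / cap p {x, y} = (1 / 2) ^ (1 / p - 1 / q) := by
  have hP : Function.Injective (![x, y] : Fin 2 → E) := by
    intro i j hij
    fin_cases i <;> fin_cases j <;> simp_all [eq_comm]
  have h := (cap_div_cap_eq_iff hpq hq hP).2 ⟨dist x y, fun i j hij => by
    fin_cases i <;> fin_cases j <;> simp_all [dist_comm]⟩
  rwa [show 1 - (Fintype.card (Fin 2) : ℝ)⁻¹ = 1 / 2 by norm_num,
    Matrix.range_cons_cons_empty] at h

theorem cap_div_cap_triple_mem_Icc (hpq : p < q) (hq : q < 0) (hxy : x ≠ y) (hyz : y ≠ z)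
    (hxz : x ≠ z) :
    cap q {x, y, z} / cap p {x, y, z} ∈
      Icc ((1 / 2) ^ (1 / p - 1 / q)) ((2 / 3) ^ (1 / p - 1 / q)) := by
  have hP := injective_vec_three hxy hyz hxz
  have hlow := half_rpow_le_cap_div_cap hpq hq hP
  have hup := cap_div_cap_le hpq hq hP
  rw [show 1 - (Fintype.card (Fin 3) : ℝ)⁻¹ = 2 / 3 by norm_num] at hup
  rw [range_vec_three] at hlow hup
  exact ⟨hlow, hup⟩

theorem cap_div_cap_triple_eq_iff (hpq : p < q) (hq : q < 0) (hxy : x ≠ y) (hyz : y ≠ z)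
    (hxz : x ≠ z) :
    cap q {x, y, z} / cap p {x, y, z} = (2 / 3) ^ (1 / p - 1 / q) ↔
      dist x y = dist y z ∧ dist x y = dist z x := by
  have h := cap_div_cap_eq_iff hpq hq (injective_vec_three hxy hyz hxz)
  rwa [show 1 - (Fintype.card (Fin 3) : ℝ)⁻¹ = 2 / 3 by norm_num, range_vec_three,
    exists_pairwise_dist_eq_vec_three_iff] at h

end FewPoints

end Riesz

end

/-- For `p < q < 0` and `T ⊂ ℝ²` a two-point or three-point set:
`(1/2)^(1/p-1/q) ≤ cap_q(T)/cap_p(T) ≤ (2/3)^(1/p-1/q)`; the lower bound is attained by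
every two-point set, and the upper bound is attained iff `T` is a regular three-point
set. -/
theorem statement7 (p q : ℝ) (hpq : p < q) (hq : q < 0)
    (T : Set (EuclideanSpace ℝ (Fin 2)))
    (hT : (∃ x y : EuclideanSpace ℝ (Fin 2), x ≠ y ∧ T = {x, y}) ∨
          (∃ x y z : EuclideanSpace ℝ (Fin 2),
            x ≠ y ∧ y ≠ z ∧ x ≠ z ∧ T = {x, y, z})) :
    ((1 / 2 : ℝ) ^ (1 / p - 1 / q) ≤ Riesz.cap q T / Riesz.cap p T ∧
      Riesz.cap q T / Riesz.cap p T ≤ (2 / 3 : ℝ) ^ (1 / p - 1 / q)) ∧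
    ((∃ x y : EuclideanSpace ℝ (Fin 2), x ≠ y ∧ T = {x, y}) →
      Riesz.cap q T / Riesz.cap p T = (1 / 2 : ℝ) ^ (1 / p - 1 / q)) ∧
    (Riesz.cap q T / Riesz.cap p T = (2 / 3 : ℝ) ^ (1 / p - 1 / q) ↔
      IsRegularThreePoint T) := by
  have hδ : 0 < 1 / p - 1 / q := by
    rw [Riesz.one_div_sub_one_div_eq, sub_pos]
    exact (inv_lt_inv₀ (by linarith) (by linarith)).2 (by linarith)
  have hlt : (1 / 2 : ℝ) ^ (1 / p - 1 / q) < (2 / 3) ^ (1 / p - 1 / q) :=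
    Real.rpow_lt_rpow (by norm_num) (by norm_num) hδ
  have hpair : ∀ x y : EuclideanSpace ℝ (Fin 2), x ≠ y → T = {x, y} →
      Riesz.cap q T / Riesz.cap p T = (1 / 2) ^ (1 / p - 1 / q) := by
    rintro x y hxy rfl
    exact Riesz.cap_div_cap_pair hpq hq hxy
  have hregular : IsRegularThreePoint T →
      Riesz.cap q T / Riesz.cap p T = (2 / 3) ^ (1 / p - 1 / q) := by
    rintro ⟨x, y, z, rfl, hd, hyz, hzx⟩
    refine (Riesz.cap_div_cap_triple_eq_iff hpq hq (dist_pos.1 hd) (dist_pos.1 (hyz ▸ hd))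
      (dist_pos.1 (dist_comm z x ▸ hzx ▸ hd))).2 ⟨hyz, hzx⟩
  rcases hT with ⟨x, y, hxy, hT⟩ | ⟨x, y, z, hxy, hyz, hxz, rfl⟩
  · have h := hpair x y hxy hT
    exact ⟨⟨h.ge, h ▸ hlt.le⟩, fun _ => h, fun h' => absurd (h.symm.trans h') hlt.ne,
      fun hreg => absurd (h.symm.trans (hregular hreg)) hlt.ne⟩
  · refine ⟨Riesz.cap_div_cap_triple_mem_Icc hpq hq hxy hyz hxz, fun ⟨x', y', hxy', hT⟩ =>
      hpair x' y' hxy' hT, fun h => ?_, hregular⟩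
    obtain ⟨hyz', hzx'⟩ := (Riesz.cap_div_cap_triple_eq_iff hpq hq hxy hyz hxz).1 h
    exact ⟨x, y, z, rfl, dist_pos.2 hxy, hyz', hzx'⟩
end
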